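/- arXiv:2301.08999 — 2 statements merged into one kernel-verified Lean document; each statement's English description precedes it below -/
import Mathlib

section
/- Let A, B be n×n complex matrices and Ã = [[0, I], [A, 0]], B̃ = [[0, 0], [0, B]] ∈ ℂ^{2n×2n}. Then rank[B̃, ÃB̃, …, Ã^{2n−1}B̃] = 2 · rank[B, AB, …, A^{n−1}B]. In particular, (Ã, B̃) satisfies the Kalman rank condition (rank = 2n) if and only if (A, B) does (rank = n). -/
/-!
Since `Ã² = diag(A, A)`, the powers of `Ã` give `Ã^(2m) B̃ = [[0, 0], [0, A^m B]]` and
`Ã^(2m+1) B̃ = [[0, A^m B], [0, 0]]`. Hence every nonzero column of the Kalman matrix of `(Ã, B̃)`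
is a column of `K = [B, AB, …, A^(n−1)B]` placed in the lower or in the upper half, and each such
column occurs. Discarding the zero columns and reordering the others turns it into the block
diagonal matrix `diag(K, K)`, of rank `2 · rank K`.
-/

/-- The horizontally concatenated Kalman-type matrix `[B, AB, …, A^(k-1)B]`. -/
noncomputable def kalmanMat {N : Type*} [Fintype N] [DecidableEq N] (k : ℕ)
    (A B : Matrix N N ℂ) : Matrix N (Fin k × N) ℂ :=
  Matrix.of fun i p => (A ^ (p.1 : ℕ) * B) i p.2

open Matrix Module

theorem Submodule.finrank_prod {K V W : Type*} [DivisionRing K] [AddCommGroup V] [Module K V]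
    [AddCommGroup W] [Module K W] [FiniteDimensional K V] [FiniteDimensional K W]
    (p : Submodule K V) (q : Submodule K W) :
    finrank K (p.prod q) = finrank K p + finrank K q := by
  have hinj : Function.Injective (p.subtype.prodMap q.subtype) :=
    Prod.map_injective.mpr ⟨p.injective_subtype, q.injective_subtype⟩
  have := LinearMap.finrank_range_of_inj hinj
  rwa [LinearMap.range_prodMap, range_subtype, range_subtype, Module.finrank_prod] at this

namespace Matrix

section Rank

variable {R m m' n n' : Type*} [Fintype n] [Fintype n']

theorem mulVecLin_fromBlocks_zero_zero [CommSemiring R] (A : Matrix m n R)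
    (D : Matrix m' n' R) :
    (fromBlocks A 0 0 D).mulVecLin =
      (LinearEquiv.sumArrowLequivProdArrow m m' R R).symm.toLinearMap ∘ₗ
        A.mulVecLin.prodMap D.mulVecLin ∘ₗ
          (LinearEquiv.sumArrowLequivProdArrow n n' R R).toLinearMap := by
  ext x (i | i) <;> simp [fromBlocks_mulVec] <;> rfl

theorem rank_fromBlocks_zero_zero [Field R] [Finite m] [Finite m'] (A : Matrix m n R)
    (D : Matrix m' n' R) : (fromBlocks A 0 0 D).rank = A.rank + D.rank := by
  rw [rank, mulVecLin_fromBlocks_zero_zero, LinearMap.range_comp,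
    LinearMap.range_comp_of_range_eq_top _ (LinearEquiv.range _), LinearEquiv.finrank_map_eq,
    LinearMap.range_prodMap, Submodule.finrank_prod]
  rfl

theorem rank_submatrix_id_eq_of_col_eq_zero {n₀ : Type*} [CommSemiring R] [Fintype n₀]
    (A : Matrix m n R) (φ : n₀ → n) (h : ∀ j, j ∉ Set.range φ → A.col j = 0) :
    (A.submatrix id φ).rank = A.rank := by
  suffices Submodule.span R (Set.range (A.submatrix id φ).col) =
      Submodule.span R (Set.range A.col) by
    rw [rank_eq_finrank_span_cols, rank_eq_finrank_span_cols, this]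
  apply le_antisymm
  · exact Submodule.span_mono (Set.range_comp_subset_range φ A.col)
  · rw [Submodule.span_le]
    rintro _ ⟨j, rfl⟩
    by_cases hj : j ∈ Set.range φ
    · obtain ⟨i, rfl⟩ := hj
      exact Submodule.subset_span ⟨i, rfl⟩
    · simp [h j hj]

end Rank

variable {α N : Type*} [Fintype N] [DecidableEq N]

theorem fromBlocks_zero_one_pow_two_mul [Semiring α] (A : Matrix N N α) (m : ℕ) :
    fromBlocks 0 1 A 0 ^ (2 * m) = fromBlocks (A ^ m) 0 0 (A ^ m) := by
  rw [pow_mul, sq, fromBlocks_multiply]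
  simpa using fromBlocks_diagonal_pow A A m

theorem fromBlocks_zero_one_pow_two_mul_add_one [Semiring α] (A : Matrix N N α) (m : ℕ) :
    fromBlocks 0 1 A 0 ^ (2 * m + 1) = fromBlocks 0 (A ^ m) (A ^ (m + 1)) 0 := by
  simp [pow_succ, fromBlocks_zero_one_pow_two_mul, fromBlocks_multiply]

end Matrix

section Kalman

variable {N : Type*} [Fintype N] [DecidableEq N]

def doubledKalmanCol (k : ℕ) : (Fin k × N) ⊕ (Fin k × N) → Fin (2 * k) × (N ⊕ N) :=
  Sum.elim (fun p => (⟨2 * p.1 + 1, by omega⟩, .inr p.2)) (fun p => (⟨2 * p.1, by omega⟩, .inr p.2))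

theorem kalmanMat_submatrix_doubledKalmanCol (k : ℕ) (A B : Matrix N N ℂ) :
    (kalmanMat (2 * k) (fromBlocks 0 1 A 0) (fromBlocks 0 0 0 B)).submatrix id
        (doubledKalmanCol k) =
      fromBlocks (kalmanMat k A B) 0 0 (kalmanMat k A B) := by
  ext (i | i) (⟨j, c⟩ | ⟨j, c⟩) <;>
    simp [kalmanMat, doubledKalmanCol, fromBlocks_zero_one_pow_two_mul,
      fromBlocks_zero_one_pow_two_mul_add_one, fromBlocks_multiply]

theorem col_kalmanMat_eq_zero_of_notMem_range_doubledKalmanCol (k : ℕ) (A B : Matrix N N ℂ)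
    (p : Fin (2 * k) × (N ⊕ N)) (hp : p ∉ Set.range (doubledKalmanCol k)) :
    (kalmanMat (2 * k) (fromBlocks 0 1 A 0) (fromBlocks 0 0 0 B)).col p = 0 := by
  rcases p with ⟨j, c | c⟩
  · ext i
    simp [kalmanMat, mul_apply]
  · obtain ⟨m, hm | hm⟩ := Nat.even_or_odd' j
    · exact absurd ⟨.inr (⟨m, by omega⟩, c), by simp [doubledKalmanCol, ← hm]⟩ hp
    · exact absurd ⟨.inl (⟨m, by omega⟩, c), by simp [doubledKalmanCol, ← hm]⟩ hp

theorem rank_kalmanMat_fromBlocks (k : ℕ) (A B : Matrix N N ℂ) :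
    (kalmanMat (2 * k) (fromBlocks 0 1 A 0) (fromBlocks 0 0 0 B)).rank =
      2 * (kalmanMat k A B).rank := by
  rw [← rank_submatrix_id_eq_of_col_eq_zero _ _
      (col_kalmanMat_eq_zero_of_notMem_range_doubledKalmanCol k A B),
    kalmanMat_submatrix_doubledKalmanCol, rank_fromBlocks_zero_zero, two_mul]

end Kalman

/-- For `Ã = [[0, I], [A, 0]]` and `B̃ = [[0, 0], [0, B]]` in `ℂ^{2n×2n}`:
`rank [B̃, ÃB̃, …, Ã^(2n−1)B̃] = 2 · rank [B, AB, …, A^(n−1)B]`; in particular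
`(Ã, B̃)` satisfies the Kalman rank condition iff `(A, B)` does. -/
theorem stmt_7 (n : ℕ) (A B : Matrix (Fin n) (Fin n) ℂ) :
    (kalmanMat (2 * n) (Matrix.fromBlocks 0 1 A 0 : Matrix (Fin n ⊕ Fin n) (Fin n ⊕ Fin n) ℂ)
        (Matrix.fromBlocks 0 0 0 B)).rank = 2 * (kalmanMat n A B).rank
    ∧ ((kalmanMat (2 * n)
          (Matrix.fromBlocks 0 1 A 0 : Matrix (Fin n ⊕ Fin n) (Fin n ⊕ Fin n) ℂ)
          (Matrix.fromBlocks 0 0 0 B)).rank = 2 * n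
        ↔ (kalmanMat n A B).rank = n) := by
  have hrank := rank_kalmanMat_fromBlocks n A B
  exact ⟨hrank, by rw [hrank]; omega⟩
end

section
/- Let A be an n×n complex matrix and Ã = [[0, I], [A, 0]] ∈ ℂ^{2n×2n}. Then exp(tÃ) = [[S₂(t), S₁(t)], [S₁(t)·A, S₂(t)]], where S₁(t) = Σ_{k≥0} t^{2k+1}/(2k+1)! · A^k and S₂(t) = Σ_{k≥0} t^{2k}/(2k)! · A^k. -/
/-!
Since `Ã² = diag(A, A)`, the even powers of `Ã` are `diag(A^k, A^k)` and the odd powers are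
`[[0, A^k], [A^k A, 0]]`. Splitting the (absolutely convergent) exponential series of `tÃ` into
its even and odd parts and summing block by block gives `S₂(t)` on the diagonal and `S₁(t)`,
`S₁(t) A` off it. The series `S₁`, `S₂` need no separate estimate: they are blocks of subseries
of the convergent exponential series.
-/

open Matrix Nat

section BlockSums

variable {X R l m n o : Type*} [AddCommMonoid R] [TopologicalSpace R] {L : SummationFilter X}

theorem HasSum.matrix_fromBlocks {a : X → Matrix n l R} {b : X → Matrix n m R}
    {c : X → Matrix o l R} {d : X → Matrix o m R} {A : Matrix n l R} {B : Matrix n m R}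
    {C : Matrix o l R} {D : Matrix o m R} (ha : HasSum a A L) (hb : HasSum b B L)
    (hc : HasSum c C L) (hd : HasSum d D L) :
    HasSum (fun x => fromBlocks (a x) (b x) (c x) (d x)) (fromBlocks A B C D) L := by
  refine Pi.hasSum.2 fun i => Pi.hasSum.2 fun j => ?_
  rcases i with i | i <;> rcases j with j | j
  · exact Pi.hasSum.1 (Pi.hasSum.1 ha i) j
  · exact Pi.hasSum.1 (Pi.hasSum.1 hb i) j
  · exact Pi.hasSum.1 (Pi.hasSum.1 hc i) j
  · exact Pi.hasSum.1 (Pi.hasSum.1 hd i) j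

theorem Summable.matrix_toBlocks₁₁ {f : X → Matrix (n ⊕ o) (l ⊕ m) R} (hf : Summable f L) :
    Summable (fun x => (f x).toBlocks₁₁) L :=
  Pi.summable.2 fun _ => Pi.summable.2 fun _ => Pi.summable.1 (Pi.summable.1 hf _) _

theorem Summable.matrix_toBlocks₁₂ {f : X → Matrix (n ⊕ o) (l ⊕ m) R} (hf : Summable f L) :
    Summable (fun x => (f x).toBlocks₁₂) L :=
  Pi.summable.2 fun _ => Pi.summable.2 fun _ => Pi.summable.1 (Pi.summable.1 hf _) _

end BlockSums

open scoped Matrix.Norms.Operator in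
theorem Matrix.summable_pow_div_factorial_smul_pow {n 𝔸 : Type*} [Fintype n] [DecidableEq n]
    [NormedRing 𝔸] [NormedAlgebra ℝ 𝔸] [CompleteSpace 𝔸] (M : Matrix n n 𝔸) (t : ℝ) :
    Summable fun k => (t ^ k / k ! : ℝ) • M ^ k := by
  -- The completeness instance has to be supplied by hand: instance search does not see through
  -- the operator-norm uniformity to the product uniformity.
  have hcomplete : CompleteSpace (Matrix n n 𝔸) := (inferInstance : CompleteSpace (n → n → 𝔸))
  have h := @NormedSpace.expSeries_summable' ℝ (Matrix n n 𝔸) _ _ _ _ _ hcomplete (t • M)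
  simp only [smul_pow, smul_smul, inv_mul_eq_div] at h
  exact h

section FromBlocksPowers

variable {m n α : Type*} [Fintype m] [Fintype n] [DecidableEq m] [DecidableEq n] [Semiring α]
  (B : Matrix m n α) (C : Matrix n m α)

theorem Matrix.fromBlocks_zero_zero_pow_two_mul (k : ℕ) :
    fromBlocks 0 B C 0 ^ (2 * k) = fromBlocks ((B * C) ^ k) 0 0 ((C * B) ^ k) := by
  rw [pow_mul, sq, fromBlocks_multiply, ← fromBlocks_diagonal_pow]
  simp

theorem Matrix.fromBlocks_zero_zero_pow_two_mul_add_one (k : ℕ) :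
    fromBlocks 0 B C 0 ^ (2 * k + 1) = fromBlocks 0 ((B * C) ^ k * B) ((C * B) ^ k * C) 0 := by
  rw [pow_succ, fromBlocks_zero_zero_pow_two_mul, fromBlocks_multiply]
  simp

end FromBlocksPowers

/-- Matrix exponential of a block anti-diagonal matrix:
`exp(tÃ) = [[S₂(t), S₁(t)], [S₁(t)A, S₂(t)]]` for `Ã = [[0, I], [A, 0]]`, where
`exp`, `S₁`, `S₂` are given by their (absolutely convergent) power series:
`S₁(t) = Σ t^(2k+1)/(2k+1)! A^k` and `S₂(t) = Σ t^(2k)/(2k)! A^k`. -/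
theorem stmt_8 (n : ℕ) (A : Matrix (Fin n) (Fin n) ℂ) (t : ℝ) :
    (∑' k : ℕ, ((t ^ k / k.factorial : ℝ)) •
        ((Matrix.fromBlocks 0 1 A 0 : Matrix (Fin n ⊕ Fin n) (Fin n ⊕ Fin n) ℂ)) ^ k)
      = Matrix.fromBlocks
          (∑' k : ℕ, ((t ^ (2 * k) / (2 * k).factorial : ℝ)) • A ^ k)
          (∑' k : ℕ, ((t ^ (2 * k + 1) / (2 * k + 1).factorial : ℝ)) • A ^ k)
          ((∑' k : ℕ, ((t ^ (2 * k + 1) / (2 * k + 1).factorial : ℝ)) • A ^ k) * A)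
          (∑' k : ℕ, ((t ^ (2 * k) / (2 * k).factorial : ℝ)) • A ^ k) := by
  set B : Matrix (Fin n ⊕ Fin n) (Fin n ⊕ Fin n) ℂ := fromBlocks 0 1 A 0
  have hexp := B.summable_pow_div_factorial_smul_pow t
  have hsum_even : Summable fun k => ((t ^ (2 * k) / (2 * k)! : ℝ)) • B ^ (2 * k) :=
    hexp.comp_injective (mul_right_injective₀ two_ne_zero)
  have hsum_odd : Summable fun k => ((t ^ (2 * k + 1) / (2 * k + 1)! : ℝ)) • B ^ (2 * k + 1) :=
    hexp.comp_injective ((add_left_injective 1).comp (mul_right_injective₀ two_ne_zero))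
  rw [← tsum_even_add_odd (f := fun k => (t ^ k / k ! : ℝ) • B ^ k) hsum_even hsum_odd]
  simp only [B, fromBlocks_zero_zero_pow_two_mul, fromBlocks_zero_zero_pow_two_mul_add_one,
    Matrix.one_mul, Matrix.mul_one, fromBlocks_smul, smul_zero] at hsum_even hsum_odd ⊢
  have hS₂ := hsum_even.matrix_toBlocks₁₁.hasSum
  have hS₁ := hsum_odd.matrix_toBlocks₁₂.hasSum
  simp only [toBlocks_fromBlocks₁₁, toBlocks_fromBlocks₁₂] at hS₂ hS₁
  have hS₁A := hS₁.mul_right A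
  simp only [smul_mul_assoc] at hS₁A
  rw [(hS₂.matrix_fromBlocks hasSum_zero hasSum_zero hS₂).tsum_eq,
    (hasSum_zero.matrix_fromBlocks hS₁ hS₁A hasSum_zero).tsum_eq, fromBlocks_add]
  simp only [add_zero, zero_add]
end
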